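/- arXiv:2004.07303 — 2 statements merged into one kernel-verified Lean document; each statement's English description precedes it below -/
import Mathlib

section
/- For finite sets I, J and k ∈ I, the assignment on generators given by: t_{αβ} ↦ t_{αβ} for α, β ∈ J; t_{ij} ↦ t_{ij} if k ∉ {i,j}; t_{kj} ↦ Σ_{p ∈ J} t_{pj}; t_{ik} ↦ Σ_{p ∈ J} t_{ip}, extends to a well-defined Lie algebra homomorphism ∘_k : t_I ⊕ t_J → t_{(I \ {k}) ⊔ J} (i.e. this assignment respects the defining relations (S), (L), (4T) of the Kohno–Drinfeld Lie algebras). -/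
/-! STATEMENT 10: the operadic partial composition
`∘_k : t_I ⊕ t_J → t_{(I∖{k}) ⊔ J}` is a well-defined Lie algebra homomorphism. -/

section ProdLie

variable {R : Type*} [CommRing R] {L M : Type*} [LieRing L] [LieRing M]

/-- The componentwise Lie ring structure on a binary product. -/
noncomputable instance Prod.instLieRing : LieRing (L × M) :=
  { (inferInstance : AddCommGroup (L × M)) with
    bracket := fun x y => (⁅x.1, y.1⁆, ⁅x.2, y.2⁆)
    add_lie := fun x y z => Prod.ext (add_lie x.1 y.1 z.1) (add_lie x.2 y.2 z.2)
    lie_add := fun x y z => Prod.ext (lie_add x.1 y.1 z.1) (lie_add x.2 y.2 z.2)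
    lie_self := fun x => Prod.ext (lie_self x.1) (lie_self x.2)
    leibniz_lie := fun x y z =>
      Prod.ext (leibniz_lie x.1 y.1 z.1) (leibniz_lie x.2 y.2 z.2) }

/-- The componentwise Lie algebra structure on a binary product. -/
noncomputable instance Prod.instLieAlgebra [LieAlgebra R L] [LieAlgebra R M] :
    LieAlgebra R (L × M) :=
  { lie_smul := fun t x y => Prod.ext (lie_smul t x.1 y.1) (lie_smul t x.2 y.2) }

end ProdLie

variable (k : Type*) [CommRing k] [Algebra ℚ k]

/-- The free generator `t_{ij}` (`i ≠ j`). -/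
noncomputable def kdT {I : Type*} (i j : I) (h : i ≠ j) :
    FreeLieAlgebra k {p : I × I // p.1 ≠ p.2} :=
  FreeLieAlgebra.of k ⟨(i, j), h⟩

/-- The defining relations (S), (L), (4T) of the Kohno–Drinfeld Lie algebra. -/
noncomputable def kdRels (I : Type*) : Set (FreeLieAlgebra k {p : I × I // p.1 ≠ p.2}) :=
  {x | (∃ (i j : I) (h : i ≠ j), x = kdT k i j h - kdT k j i h.symm) ∨
    (∃ (i j i' j' : I) (h : i ≠ j) (h' : i' ≠ j'),
      ({i, j} ∩ {i', j'} : Set I) = ∅ ∧ x = ⁅kdT k i j h, kdT k i' j' h'⁆) ∨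
    (∃ (i j l : I) (hij : i ≠ j) (hil : i ≠ l) (hjl : j ≠ l),
      x = ⁅kdT k i j hij, kdT k i l hil + kdT k j l hjl⁆)}

/-- The ideal of relations. -/
noncomputable def kdIdeal (I : Type*) : LieIdeal k (FreeLieAlgebra k {p : I × I // p.1 ≠ p.2}) :=
  LieSubmodule.lieSpan k _ (kdRels k I)

/-- The Kohno–Drinfeld Lie algebra `t_I(k)`. -/
noncomputable abbrev KD (I : Type*) := FreeLieAlgebra k {p : I × I // p.1 ≠ p.2} ⧸ kdIdeal k I

/-- The image of `t_{ij}` in `t_I(k)`. -/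
noncomputable def kdTbar {I : Type*} (i j : I) (h : i ≠ j) : KD k I :=
  LieSubmodule.Quotient.mk (N := kdIdeal k I) (kdT k i j h)

/-!
For pairwise disjoint finite blocks `B i ⊆ I'`, the assignment
`t_{ij} ↦ t_{B_i B_j} := ∑_{a ∈ B_i, b ∈ B_j} t_{ab}` respects the Kohno–Drinfeld relations:
(S) and (L) hold termwise, and (4T) follows from `t_{B_i B_l} + t_{B_j B_l} = t_{B_i ∪ B_j, B_l}`
together with the fact that `t_{ab}` commutes with `∑_{x ∈ X} t_{xc}` whenever `a, b ∈ X ∌ c`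
((4T) for `a, b, c` plus (L) for the remaining `x`). The partial composition is this map for
`B_{k₀} = J` and `B_i = {i}` otherwise, added to the inclusion `t_J → t_{(I∖{k₀}) ⊔ J}`; the
same commutation fact shows that the two maps have commuting images, so their sum is a Lie
algebra homomorphism on the product.
-/

section LieAlgebra

variable {R L L₁ L₂ : Type*} [CommRing R] [LieRing L] [LieAlgebra R L]
  [LieRing L₁] [LieAlgebra R L₁] [LieRing L₂] [LieAlgebra R L₂]

noncomputable def LieSubmodule.Quotient.lift (I : LieIdeal R L₁) (f : L₁ →ₗ⁅R⁆ L)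
    (h : ∀ x ∈ I, f x = 0) : L₁ ⧸ I →ₗ⁅R⁆ L :=
  { (I : Submodule R L₁).liftQ (f : L₁ →ₗ[R] L) h with
    map_lie' := fun {x y} => Quotient.inductionOn₂' x y f.map_lie }

theorem FreeLieAlgebra.lieSpan_range_of {X : Type*} :
    LieSubalgebra.lieSpan R (FreeLieAlgebra R X) (Set.range (of R)) = ⊤ := by
  set S := LieSubalgebra.lieSpan R (FreeLieAlgebra R X) (Set.range (of R))
  let g : FreeLieAlgebra R X →ₗ⁅R⁆ S :=
    lift R fun x => ⟨of R x, LieSubalgebra.subset_lieSpan ⟨x, rfl⟩⟩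
  have hg : S.incl.comp g = LieHom.id := hom_ext fun x => by simp [g]
  refine eq_top_iff.mpr fun a _ => ?_
  have ha : S.incl (g a) = a := LieHom.congr_fun hg a
  exact ha ▸ (g a).2

theorem LieHom.lie_apply_eq_zero_of_lieSpan_eq_top {s : Set L₁}
    (hs : LieSubalgebra.lieSpan R L₁ s = ⊤) (f : L₁ →ₗ⁅R⁆ L) {c : L}
    (h : ∀ x ∈ s, ⁅f x, c⁆ = 0) (a : L₁) : ⁅f a, c⁆ = 0 := by
  have ha : a ∈ LieSubalgebra.lieSpan R L₁ s := hs ▸ LieSubalgebra.mem_top a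
  induction ha using LieSubalgebra.lieSpan_induction with
  | mem x hx => exact h x hx
  | zero => simp
  | add x y _ _ hx hy => rw [map_add, add_lie, hx, hy, add_zero]
  | smul t x _ hx => rw [map_smul, smul_lie, hx, smul_zero]
  | lie x y _ _ hx hy => rw [f.map_lie, lie_lie, hx, hy, lie_zero, lie_zero, sub_zero]

theorem FreeLieAlgebra.lie_lift_lift_eq_zero {X Y : Type*} {f : X → L} {g : Y → L}
    (h : ∀ x y, ⁅f x, g y⁆ = 0) (a : FreeLieAlgebra R X) (b : FreeLieAlgebra R Y) :
    ⁅lift R f a, lift R g b⁆ = 0 := by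
  refine (lift R f).lie_apply_eq_zero_of_lieSpan_eq_top (lieSpan_range_of (R := R)) ?_ a
  rintro _ ⟨x, rfl⟩
  rw [← lie_skew, neg_eq_zero, lift_of_apply]
  refine (lift R g).lie_apply_eq_zero_of_lieSpan_eq_top (lieSpan_range_of (R := R)) ?_ b
  rintro _ ⟨y, rfl⟩
  rw [← lie_skew, neg_eq_zero, lift_of_apply, h]

def LieHom.coprod (f : L₁ →ₗ⁅R⁆ L) (g : L₂ →ₗ⁅R⁆ L) (h : ∀ x y, ⁅f x, g y⁆ = 0) :
    L₁ × L₂ →ₗ⁅R⁆ L :=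
  { LinearMap.coprod (f : L₁ →ₗ[R] L) (g : L₂ →ₗ[R] L) with
    map_lie' := fun {x y} => by
      change f ⁅x.1, y.1⁆ + g ⁅x.2, y.2⁆ = ⁅f x.1 + g x.2, f y.1 + g y.2⁆
      rw [f.map_lie, g.map_lie, lie_add, add_lie, add_lie, h x.1 y.2,
        ← lie_skew (g x.2) (f y.1), h y.1 x.2, neg_zero, add_zero, zero_add] }

@[simp]
theorem LieHom.coprod_apply (f : L₁ →ₗ⁅R⁆ L) (g : L₂ →ₗ⁅R⁆ L) (h : ∀ x y, ⁅f x, g y⁆ = 0)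
    (x : L₁ × L₂) : coprod f g h x = f x.1 + g x.2 :=
  rfl

end LieAlgebra

theorem Set.pair_inter_pair_eq_empty_iff {α : Type*} {a b c d : α} :
    ({a, b} ∩ {c, d} : Set α) = ∅ ↔ a ≠ c ∧ a ≠ d ∧ b ≠ c ∧ b ≠ d := by
  simp only [← Set.disjoint_iff_inter_eq_empty, Set.disjoint_insert_left,
    Set.disjoint_insert_right, Set.disjoint_singleton, Set.mem_insert_iff, Set.mem_singleton_iff]
  tauto

section KohnoDrinfeld

open Finset Function

variable {R : Type*} [CommRing R] {I : Type*}

namespace KD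

section Lift

variable {L : Type*} [LieRing L] [LieAlgebra R L] (t : ∀ i j : I, i ≠ j → L)
  (hS : ∀ i j h, t i j h = t j i h.symm)
  (hL : ∀ i j i' j' h h', i ≠ i' → i ≠ j' → j ≠ i' → j ≠ j' → ⁅t i j h, t i' j' h'⁆ = 0)
  (h4T : ∀ i j l hij hil hjl, ⁅t i j hij, t i l hil + t j l hjl⁆ = 0)

noncomputable def lift : KD R I →ₗ⁅R⁆ L :=
  LieSubmodule.Quotient.lift (kdIdeal R I)
    (FreeLieAlgebra.lift R fun p : {p : I × I // p.1 ≠ p.2} => t p.1.1 p.1.2 p.2)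
    fun _ hx => LieHom.mem_ker.mp <| LieSubmodule.lieSpan_le.mpr (by
      rintro _ (⟨i, j, h, rfl⟩ | ⟨i, j, i', j', h, h', hd, rfl⟩ | ⟨i, j, l, hij, hil, hjl, rfl⟩) <;>
        simp only [SetLike.mem_coe, LieHom.mem_ker, map_sub, map_add, LieHom.map_lie, kdT,
          FreeLieAlgebra.lift_of_apply]
      · exact sub_eq_zero.mpr (hS i j h)
      · obtain ⟨h₁, h₂, h₃, h₄⟩ := Set.pair_inter_pair_eq_empty_iff.mp hd
        exact hL i j i' j' h h' h₁ h₂ h₃ h₄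
      · exact h4T i j l hij hil hjl) hx

@[simp]
theorem lift_kdTbar (i j : I) (h : i ≠ j) : lift t hS hL h4T (kdTbar R i j h) = t i j h :=
  FreeLieAlgebra.lift_of_apply _ _

variable {t hS hL h4T} in
theorem lie_lift_lift_eq_zero {J : Type*} {s : ∀ α β : J, α ≠ β → L} {hS' hL' h4T'}
    (h : ∀ i j hij α β hαβ, ⁅t i j hij, s α β hαβ⁆ = 0) (x : KD R I) (y : KD R J) :
    ⁅lift t hS hL h4T x, lift s hS' hL' h4T' y⁆ = 0 := by
  obtain ⟨a, rfl⟩ := LieSubmodule.Quotient.surjective_mk' _ x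
  obtain ⟨b, rfl⟩ := LieSubmodule.Quotient.surjective_mk' _ y
  exact FreeLieAlgebra.lie_lift_lift_eq_zero (fun p q => h _ _ p.2 _ _ q.2) a b

end Lift

theorem mk_eq_zero_of_mem_kdRels {x : FreeLieAlgebra R {p : I × I // p.1 ≠ p.2}}
    (hx : x ∈ kdRels R I) : LieSubmodule.Quotient.mk (N := kdIdeal R I) x = 0 :=
  LieSubmodule.Quotient.mk_eq_zero'.mpr (LieSubmodule.subset_lieSpan hx)

theorem kdTbar_comm {i j : I} (h : i ≠ j) : kdTbar R i j h = kdTbar R j i h.symm :=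
  sub_eq_zero.mp (mk_eq_zero_of_mem_kdRels (Or.inl ⟨i, j, h, rfl⟩))

variable (R) in
open Classical in
/-- `t_{ab}`, extended by `t_{aa} = 0` so that block sums need no side conditions. -/
noncomputable def gen (a b : I) : KD R I :=
  if h : a = b then 0 else kdTbar R a b h

variable {a b c d : I}

theorem gen_of_ne (h : a ≠ b) : gen R a b = kdTbar R a b h :=
  dif_neg h

@[simp]
theorem gen_self (a : I) : gen R a a = 0 :=
  dif_pos rfl

theorem gen_comm (a b : I) : gen R a b = gen R b a := by
  by_cases h : a = b
  · rw [h]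
  · rw [gen_of_ne h, gen_of_ne (Ne.symm h), kdTbar_comm]

theorem lie_gen_gen_eq_zero (h₁ : a ≠ c) (h₂ : a ≠ d) (h₃ : b ≠ c) (h₄ : b ≠ d) :
    ⁅gen R a b, gen R c d⁆ = 0 := by
  by_cases hab : a = b
  · simp [hab]
  by_cases hcd : c = d
  · simp [hcd]
  rw [gen_of_ne hab, gen_of_ne hcd]
  exact mk_eq_zero_of_mem_kdRels (Or.inr (Or.inl ⟨a, b, c, d, hab, hcd,
    Set.pair_inter_pair_eq_empty_iff.mpr ⟨h₁, h₂, h₃, h₄⟩, rfl⟩))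

theorem lie_gen_add_gen (a b c : I) : ⁅gen R a b, gen R a c + gen R b c⁆ = 0 := by
  by_cases hab : a = b
  · simp [hab]
  by_cases hac : a = c
  · simp [hac, gen_comm b c]
  by_cases hbc : b = c
  · simp [hbc]
  rw [gen_of_ne hab, gen_of_ne hac, gen_of_ne hbc]
  exact mk_eq_zero_of_mem_kdRels (Or.inr (Or.inr ⟨a, b, c, hab, hac, hbc, rfl⟩))

theorem lie_gen_sum_gen_eq_zero {X : Finset I} (ha : a ∈ X) (hb : b ∈ X) (hc : c ∉ X) :
    ⁅gen R a b, ∑ x ∈ X, gen R x c⁆ = 0 := by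
  classical
  by_cases hab : a = b
  · simp [hab]
  have hb' : b ∈ X.erase a := mem_erase.mpr ⟨Ne.symm hab, hb⟩
  rw [← add_sum_erase X _ ha, ← add_sum_erase _ _ hb', ← add_assoc, lie_add, lie_gen_add_gen,
    zero_add, lie_sum]
  refine sum_eq_zero fun x hx => ?_
  obtain ⟨hxb, hx⟩ := mem_erase.mp hx
  obtain ⟨hxa, hx⟩ := mem_erase.mp hx
  exact lie_gen_gen_eq_zero (Ne.symm hxa) (ne_of_mem_of_not_mem ha hc) (Ne.symm hxb)
    (ne_of_mem_of_not_mem hb hc)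

variable (R) in
noncomputable def sumGen (X Y : Finset I) : KD R I :=
  ∑ a ∈ X, ∑ b ∈ Y, gen R a b

variable {X Y Z X' Y' : Finset I}

@[simp]
theorem sumGen_singleton (a b : I) : sumGen R {a} {b} = gen R a b := by
  simp [sumGen]

theorem sumGen_comm (X Y : Finset I) : sumGen R X Y = sumGen R Y X := by
  rw [sumGen, sum_comm]
  exact sum_congr rfl fun _ _ => sum_congr rfl fun _ _ => gen_comm _ _

theorem sumGen_union_left [DecidableEq I] (h : Disjoint X Y) :
    sumGen R (X ∪ Y) Z = sumGen R X Z + sumGen R Y Z :=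
  sum_union h

theorem lie_sumGen_sumGen_eq_zero [DecidableEq I] (h : Disjoint (X ∪ Y) (X' ∪ Y')) :
    ⁅sumGen R X Y, sumGen R X' Y'⁆ = 0 := by
  have hne := disjoint_iff_ne.mp h
  simp_rw [sumGen, sum_lie, lie_sum]
  refine sum_eq_zero fun a ha => sum_eq_zero fun b hb => sum_eq_zero fun c hc =>
    sum_eq_zero fun d hd => lie_gen_gen_eq_zero ?_ ?_ ?_ ?_ <;>
    apply hne <;> simp [ha, hb, hc, hd]

theorem lie_sumGen_sumGen_union_eq_zero [DecidableEq I] (h : Disjoint (X ∪ Y) Z) :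
    ⁅sumGen R X Y, sumGen R (X ∪ Y) Z⁆ = 0 := by
  rw [sumGen, sumGen, sum_comm (s := X ∪ Y), sum_lie]
  refine sum_eq_zero fun a ha => ?_
  rw [sum_lie]
  refine sum_eq_zero fun b hb => ?_
  rw [lie_sum]
  exact sum_eq_zero fun c hc =>
    lie_gen_sum_gen_eq_zero (mem_union_left _ ha) (mem_union_right _ hb) (disjoint_right.mp h hc)

theorem lie_sumGen_gen_eq_zero (hXY : Disjoint X Y) (hX : c ∈ X ↔ d ∈ X) (hY : c ∈ Y ↔ d ∈ Y) :
    ⁅sumGen R X Y, gen R c d⁆ = 0 := by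
  have inside : ∀ {X Y : Finset I}, Disjoint X Y → c ∈ X → d ∈ X →
      ⁅sumGen R X Y, gen R c d⁆ = 0 := by
    intro X Y hXY hc hd
    rw [sumGen, sum_comm, ← lie_skew, neg_eq_zero, lie_sum]
    exact sum_eq_zero fun b hb => lie_gen_sum_gen_eq_zero hc hd (disjoint_right.mp hXY hb)
  by_cases hcX : c ∈ X
  · exact inside hXY hcX (hX.mp hcX)
  by_cases hcY : c ∈ Y
  · rw [sumGen_comm]
    exact inside hXY.symm hcY (hY.mp hcY)
  rw [sumGen, sum_lie]
  refine sum_eq_zero fun a ha => ?_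
  rw [sum_lie]
  refine sum_eq_zero fun b hb => lie_gen_gen_eq_zero ?_ ?_ ?_ ?_
  · exact ne_of_mem_of_not_mem ha hcX
  · exact ne_of_mem_of_not_mem ha (hX.not.mp hcX)
  · exact ne_of_mem_of_not_mem hb hcY
  · exact ne_of_mem_of_not_mem hb (hY.not.mp hcY)

noncomputable def blockHom {I' : Type*} (B : I → Finset I') (hB : Pairwise (Disjoint on B)) :
    KD R I →ₗ⁅R⁆ KD R I' :=
  lift (fun i j _ => sumGen R (B i) (B j)) (fun _ _ _ => sumGen_comm _ _)
    (fun _ _ _ _ _ _ h₁ h₂ h₃ h₄ => by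
      classical
      exact lie_sumGen_sumGen_eq_zero <| disjoint_union_left.mpr
        ⟨disjoint_union_right.mpr ⟨hB h₁, hB h₂⟩, disjoint_union_right.mpr ⟨hB h₃, hB h₄⟩⟩)
    (fun _ _ _ hij hil hjl => by
      classical
      rw [← sumGen_union_left (hB hij)]
      exact lie_sumGen_sumGen_union_eq_zero (disjoint_union_left.mpr ⟨hB hil, hB hjl⟩))

@[simp]
theorem blockHom_kdTbar {I' : Type*} (B : I → Finset I') (hB : Pairwise (Disjoint on B))
    {i j : I} (h : i ≠ j) : blockHom B hB (kdTbar R i j h) = sumGen R (B i) (B j) :=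
  lift_kdTbar _ _ _ _ i j h

theorem lie_blockHom_blockHom_eq_zero {I' J : Type*} {B : I → Finset I'}
    {hB : Pairwise (Disjoint on B)} {C : J → Finset I'} {hC : Pairwise (Disjoint on C)}
    (h : ∀ i j, i ≠ j → ∀ α β, α ≠ β → ⁅sumGen R (B i) (B j), sumGen R (C α) (C β)⁆ = 0)
    (x : KD R I) (y : KD R J) : ⁅blockHom B hB x, blockHom C hC y⁆ = 0 :=
  lie_lift_lift_eq_zero h x y

end KD

end KohnoDrinfeld

section PartialComposition

open Finset Function

variable {I : Type*} (k₀ : I) (J : Type*) (R : Type*) [CommRing R]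

theorem pairwise_disjoint_singleton_inr (α β : Type*) :
    Pairwise (Disjoint on fun b : β => ({.inr b} : Finset (α ⊕ β))) :=
  fun _ _ h => disjoint_singleton.mpr (Sum.inr_injective.ne h)

noncomputable def partialCompRight : KD R J →ₗ⁅R⁆ KD R ({i : I // i ≠ k₀} ⊕ J) :=
  KD.blockHom _ (pairwise_disjoint_singleton_inr _ J)

theorem partialCompRight_kdTbar {α β : J} (h : α ≠ β) :
    partialCompRight k₀ J R (kdTbar R α β h) =
      kdTbar R (.inr α : {i : I // i ≠ k₀} ⊕ J) (.inr β) (Sum.inr_injective.ne h) := by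
  rw [partialCompRight, KD.blockHom_kdTbar, KD.sumGen_singleton, KD.gen_of_ne]

variable [Fintype J]

open Classical in
noncomputable def partialCompBlock (i : I) : Finset ({i : I // i ≠ k₀} ⊕ J) :=
  if h : i = k₀ then univ.map .inr else {.inl ⟨i, h⟩}

theorem partialCompBlock_self : partialCompBlock k₀ J k₀ = univ.map .inr :=
  dif_pos rfl

theorem partialCompBlock_of_ne {i : I} (h : i ≠ k₀) :
    partialCompBlock k₀ J i = {.inl ⟨i, h⟩} :=
  dif_neg h

theorem inr_mem_partialCompBlock_iff (i : I) (α : J) :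
    Sum.inr α ∈ partialCompBlock k₀ J i ↔ i = k₀ := by
  by_cases h : i = k₀ <;> simp [partialCompBlock, h]

theorem pairwise_disjoint_partialCompBlock : Pairwise (Disjoint on partialCompBlock k₀ J) := by
  intro i j hij
  by_cases hi : i = k₀
  · subst hi
    simp [Function.onFun, partialCompBlock_self, partialCompBlock_of_ne _ _ (Ne.symm hij)]
  by_cases hj : j = k₀
  · subst hj
    simp [Function.onFun, partialCompBlock_self, partialCompBlock_of_ne _ _ hij]
  simp [Function.onFun, partialCompBlock_of_ne _ _ hi, partialCompBlock_of_ne _ _ hj, hij]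

noncomputable def partialCompLeft : KD R I →ₗ⁅R⁆ KD R ({i : I // i ≠ k₀} ⊕ J) :=
  KD.blockHom _ (pairwise_disjoint_partialCompBlock k₀ J)

theorem lie_partialCompLeft_partialCompRight (x : KD R I) (y : KD R J) :
    ⁅partialCompLeft k₀ J R x, partialCompRight k₀ J R y⁆ = 0 :=
  KD.lie_blockHom_blockHom_eq_zero (fun _ _ hij α β _ => by
    rw [KD.sumGen_singleton]
    exact KD.lie_sumGen_gen_eq_zero (pairwise_disjoint_partialCompBlock k₀ J hij)
      (by simp only [inr_mem_partialCompBlock_iff]) (by simp only [inr_mem_partialCompBlock_iff]))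
    x y

theorem partialCompLeft_kdTbar_of_ne {i j : I} (h : i ≠ j) (hi : i ≠ k₀) (hj : j ≠ k₀) :
    partialCompLeft k₀ J R (kdTbar R i j h) =
      kdTbar R (.inl ⟨i, hi⟩ : {i : I // i ≠ k₀} ⊕ J) (.inl ⟨j, hj⟩) (by simpa using h) := by
  rw [partialCompLeft, KD.blockHom_kdTbar, partialCompBlock_of_ne _ _ hi,
    partialCompBlock_of_ne _ _ hj, KD.sumGen_singleton, KD.gen_of_ne]

theorem partialCompLeft_kdTbar_self_left {j : I} (h : k₀ ≠ j) :
    partialCompLeft k₀ J R (kdTbar R k₀ j h) =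
      ∑ p : J, kdTbar R (.inr p : {i : I // i ≠ k₀} ⊕ J) (.inl ⟨j, h.symm⟩) (by simp) := by
  simp [partialCompLeft, partialCompBlock_self, partialCompBlock_of_ne _ _ h.symm, KD.sumGen,
    KD.gen_of_ne]

theorem partialCompLeft_kdTbar_self_right {i : I} (h : i ≠ k₀) :
    partialCompLeft k₀ J R (kdTbar R i k₀ h) =
      ∑ p : J, kdTbar R (.inl ⟨i, h⟩ : {i : I // i ≠ k₀} ⊕ J) (.inr p) (by simp) := by
  simp [partialCompLeft, partialCompBlock_self, partialCompBlock_of_ne _ _ h, KD.sumGen,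
    KD.gen_of_ne]

end PartialComposition

/-- the assignment `t_{αβ} ↦ t_{αβ}` (`α, β ∈ J`), `t_{ij} ↦ t_{ij}`
(`k₀ ∉ {i,j}`), `t_{k₀ j} ↦ Σ_{p ∈ J} t_{pj}`, `t_{i k₀} ↦ Σ_{p ∈ J} t_{ip}` extends to a
Lie algebra homomorphism `t_I ⊕ t_J → t_{(I∖{k₀}) ⊔ J}`. -/
theorem kd_partial_composition (k : Type*) [CommRing k]
    (I J : Type*) [Fintype J] (k₀ : I) :
    ∃ φ : (KD k I × KD k J) →ₗ⁅k⁆ KD k ({i : I // i ≠ k₀} ⊕ J),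
      (∀ (α β : J) (h : α ≠ β),
        φ (0, kdTbar k α β h) =
          kdTbar k (Sum.inr α : {i : I // i ≠ k₀} ⊕ J) (Sum.inr β)
            (Sum.inr_injective.ne h)) ∧
      (∀ (i j : I) (h : i ≠ j) (hi : i ≠ k₀) (hj : j ≠ k₀),
        φ (kdTbar k i j h, 0) =
          kdTbar k (Sum.inl ⟨i, hi⟩ : {i : I // i ≠ k₀} ⊕ J) (Sum.inl ⟨j, hj⟩)
            (by simpa using h)) ∧
      (∀ (j : I) (h : k₀ ≠ j) (hj : j ≠ k₀),
        φ (kdTbar k k₀ j h, 0) =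
          ∑ p : J, kdTbar k (Sum.inr p : {i : I // i ≠ k₀} ⊕ J) (Sum.inl ⟨j, hj⟩)
            (by simp)) ∧
      (∀ (i : I) (h : i ≠ k₀),
        φ (kdTbar k i k₀ h, 0) =
          ∑ p : J, kdTbar k (Sum.inl ⟨i, h⟩ : {i : I // i ≠ k₀} ⊕ J) (Sum.inr p)
            (by simp)) := by
  refine ⟨LieHom.coprod (partialCompLeft k₀ J k) (partialCompRight k₀ J k)
    (lie_partialCompLeft_partialCompRight k₀ J k), ?_, ?_, ?_, ?_⟩ <;> intros <;>
    simp only [LieHom.coprod_apply, map_zero, zero_add, add_zero]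
  · exact partialCompRight_kdTbar ..
  · exact partialCompLeft_kdTbar_of_ne ..
  · exact partialCompLeft_kdTbar_self_left ..
  · exact partialCompLeft_kdTbar_self_right ..
end

section
/- Let G be a group equipped with an involutive automorphism σ, and let R, A, B ∈ G. Write R' = σ(R), A' = σ(A), B' = σ(B), and define Ã = R·A'^{-1}·R^{-1} and B̃ = R·B'^{-1}·R^{-1}. Assume σ(Ã) = R'·A^{-1}·R'^{-1} and σ(B̃) = R'·B^{-1}·R'^{-1} (which follow from σ being an involutive automorphism). Then the commutator identity (A^{-1}, B) = R·R' holds if and only if (Ã, B̃^{-1}) = R·R', where (u,v) = u v u^{-1} v^{-1}. -/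
/-! STATEMENT 11: equivalence of the two forms of the relation (E2_g) under the
substitution `Ã = R·σ(A)⁻¹·R⁻¹`, `B̃ = R·σ(B)⁻¹·R⁻¹`, where `σ` is the involutive
automorphism swapping the two strand labels and `(u,v) = u v u⁻¹ v⁻¹`. -/

theorem tilde_commutator_equivalence (G : Type*) [Group G] (σ : G →* G)
    (hσ : ∀ x : G, σ (σ x) = x) (R A B At Bt : G)
    (hAt : At = R * (σ A)⁻¹ * R⁻¹) (hBt : Bt = R * (σ B)⁻¹ * R⁻¹)
    (hσAt : σ At = σ R * A⁻¹ * (σ R)⁻¹) (hσBt : σ Bt = σ R * B⁻¹ * (σ R)⁻¹) :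
    (A⁻¹ * B * A * B⁻¹ = R * σ R) ↔ (At * Bt⁻¹ * At⁻¹ * Bt = R * σ R) := by
  subst hAt hBt
  have hinj : Function.Injective σ := Function.LeftInverse.injective hσ
  constructor <;> intro h
  · have h2 := congrArg σ h
    simp only [map_mul, map_inv, hσ] at h2
    calc R * (σ A)⁻¹ * R⁻¹ * (R * (σ B)⁻¹ * R⁻¹)⁻¹ * (R * (σ A)⁻¹ * R⁻¹)⁻¹ *
          (R * (σ B)⁻¹ * R⁻¹)
        = R * ((σ A)⁻¹ * σ B * σ A * (σ B)⁻¹) * R⁻¹ := by group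
      _ = R * (σ R * R) * R⁻¹ := by rw [h2]
      _ = R * σ R := by group
  · have h2 : (σ A)⁻¹ * σ B * σ A * (σ B)⁻¹ = σ R * R := by
      have : R * ((σ A)⁻¹ * σ B * σ A * (σ B)⁻¹) * R⁻¹ = R * σ R := by
        rw [← h]; group
      have := congrArg (fun x => R⁻¹ * x * R) this
      simpa [mul_assoc] using this
    apply hinj
    simp only [map_mul, map_inv, hσ]
    exact h2
end
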